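/- Fix ρ_p > 0 and a > 0. For each R > 0 with πR² ≥ a, let n_R = ⌈π ρ_p R²⌉, let S_R be a Borel subset of the closed disk B(0,R) ⊂ ℝ² with two-dimensional Lebesgue measure a, let X_2, …, X_{n_R} be i.i.d. random points uniformly distributed on B(0,R), and let M_1, …, M_{n_R} be i.i.d. random variables uniformly distributed on [0,1], independent of the positions. Then lim_{R→∞} Pr( M_1 < M_j for every j ∈ {2,…,n_R} with X_j ∈ S_R ) = (1 − e^{−ρ_p a}) / (ρ_p a). -/

import Mathlib

open MeasureTheory ProbabilityTheory Set Real Filter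

/-- The uniform probability measure on the closed disk of radius `R` centered at the
origin of the plane. -/
noncomputable def unifDisk (R : ℝ) : Measure (EuclideanSpace ℝ (Fin 2)) :=
  (volume (Metric.closedBall (0 : EuclideanSpace ℝ (Fin 2)) R))⁻¹ •
    volume.restrict (Metric.closedBall (0 : EuclideanSpace ℝ (Fin 2)) R)

/-- The uniform probability measure on `[0,1]`. -/
noncomputable def unifUnit : Measure ℝ := volume.restrict (Set.Icc (0:ℝ) 1)

/-!
Conditionally on the mark `t` of mobile `1`, the other `n - 1` mobiles are independent and each
one beats mobile `1` (lies in the cell with a smaller mark) with probability `p t`, where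
`p = a / (π R²)` is the chance of falling in the cell. Hence the probability is
`∫₀¹ (1 - p t)^(n-1) dt = (1 - (1 - p)^n) / (p n)`, and since `p → 0` with `p n → ρ_p a`, this
tends to `(1 - e^{-ρ_p a}) / (ρ_p a)`.
-/

open Topology

lemma tendsto_one_add_pow_of_tendsto_mul {α : Type*} {l : Filter α} {g : α → ℝ} {n : α → ℕ}
    {t : ℝ} (hg : Tendsto g l (𝓝[≠] 0)) (hgn : Tendsto (fun x => n x * g x) l (𝓝 t)) :
    Tendsto (fun x => (1 + g x) ^ n x) l (𝓝 (exp t)) := by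
  have hslope : Tendsto (fun y => y⁻¹ * log (1 + y)) (𝓝[≠] 0) (𝓝 1) := by
    simpa [add_comm] using (hasDerivAt_log one_ne_zero).tendsto_slope_zero
  have hlog : Tendsto (fun x => n x * log (1 + g x)) l (𝓝 t) := by
    refine (mul_one t ▸ hgn.mul (hslope.comp hg)).congr' ?_
    filter_upwards [hg self_mem_nhdsWithin] with x (hx : g x ≠ 0)
    rw [Function.comp_apply, mul_assoc, mul_inv_cancel_left₀ hx]
  have hpos : ∀ᶠ x in l, -1 < g x :=
    (tendsto_nhds_of_tendsto_nhdsWithin hg).eventually (eventually_gt_nhds (by norm_num))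
  refine ((continuous_exp.tendsto t).comp hlog).congr' ?_
  filter_upwards [hpos] with x hx
  rw [Function.comp_apply, ← log_pow, exp_log (pow_pos (by linarith) _)]

lemma tendsto_one_sub_one_sub_pow_div {α : Type*} {l : Filter α} {q : α → ℝ} {n : α → ℕ}
    {c : ℝ} (hc : c ≠ 0) (hq : Tendsto q l (𝓝[≠] 0))
    (hqn : Tendsto (fun x => q x * n x) l (𝓝 c)) :
    Tendsto (fun x => (1 - (1 - q x) ^ n x) / (q x * n x)) l (𝓝 ((1 - exp (-c)) / c)) := by
  have hneg : Tendsto (fun x => -q x) l (𝓝[≠] 0) := by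
    refine tendsto_nhdsWithin_iff.2 ⟨?_, ?_⟩
    · simpa using (tendsto_nhds_of_tendsto_nhdsWithin hq).neg
    · filter_upwards [hq self_mem_nhdsWithin] with x (hx : q x ≠ 0)
      exact neg_ne_zero.2 hx
  have hpow := tendsto_one_add_pow_of_tendsto_mul hneg (t := -c)
    (by simpa [mul_comm] using hqn.neg)
  simp only [← sub_eq_add_neg] at hpow
  exact (tendsto_const_nhds.sub hpow).div hqn hc

lemma tendsto_natCeil_mul_div_sq {ρ : ℝ} (hρ : 0 < ρ) (a : ℝ) :
    Tendsto (fun R : ℝ => a / (π * R ^ 2) * ⌈π * ρ * R ^ 2⌉₊) atTop (𝓝 (ρ * a)) := by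
  have hsq : Tendsto (fun R : ℝ => π * ρ * R ^ 2) atTop atTop :=
    (tendsto_pow_atTop two_ne_zero).const_mul_atTop (by positivity)
  have := (tendsto_nat_ceil_div_atTop.comp hsq).const_mul (ρ * a)
  rw [mul_one] at this
  refine this.congr' ?_
  filter_upwards [eventually_ne_atTop 0] with R hR
  simp only [Function.comp_apply]
  field_simp

lemma integral_one_sub_mul_pow {p : ℝ} (hp : p ≠ 0) (k : ℕ) :
    ∫ t in (0:ℝ)..1, (1 - p * t) ^ k = (1 - (1 - p) ^ (k + 1)) / (p * (k + 1)) := by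
  rw [intervalIntegral.integral_comp_sub_mul (fun x => x ^ k) hp, integral_pow]
  simp only [mul_one, mul_zero, sub_zero, smul_eq_mul, one_pow]
  field_simp

lemma lintegral_Icc_one_sub_mul_pow {p : ℝ} (hp₀ : 0 < p) (hp₁ : p ≤ 1) (k : ℕ) :
    ∫⁻ t in Icc (0:ℝ) 1, (1 - ENNReal.ofReal p * ENNReal.ofReal t) ^ k =
      ENNReal.ofReal ((1 - (1 - p) ^ (k + 1)) / (p * (k + 1))) := by
  have hnonneg : ∀ t ∈ Icc (0:ℝ) 1, 0 ≤ 1 - p * t := fun t ht => by nlinarith [ht.1, ht.2]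
  rw [← integral_one_sub_mul_pow hp₀.ne', intervalIntegral.integral_of_le zero_le_one,
    ← integral_Icc_eq_integral_Ioc, ofReal_integral_eq_lintegral_ofReal]
  · refine setLIntegral_congr_fun measurableSet_Icc fun t ht => ?_
    rw [ENNReal.ofReal_pow (hnonneg t ht), ENNReal.ofReal_sub _ (mul_nonneg hp₀.le ht.1),
      ENNReal.ofReal_one, ENNReal.ofReal_mul hp₀.le]
  · exact (by fun_prop : Continuous fun t : ℝ => (1 - p * t) ^ k).integrableOn_Icc
  · exact (ae_restrict_iff' measurableSet_Icc).2
      (ae_of_all _ fun t ht => pow_nonneg (hnonneg t ht) k)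

section Pi
variable {ι α : Type*} [Fintype ι] [DecidableEq ι] [MeasurableSpace α]

theorem measurePreserving_eval_prod_restrict_ne (ν : Measure α) [SigmaFinite ν] (i₀ : ι) :
    MeasurePreserving (fun y : ι → α => (y i₀, fun j : {j // ¬ j = i₀} => y j))
      (Measure.pi fun _ => ν) (ν.prod (Measure.pi fun _ => ν)) := by
  -- `measurePreserving_piEquivPiSubtypeProd` measures `{j // j = i₀} → α` with this instance,
  -- not with `Fintype.subtypeEq`, which `measurePreserving_piUnique` would otherwise pick.
  let : Fintype {j // j = i₀} := Subtype.fintype _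
  exact ((measurePreserving_piUnique (fun _ : {j // j = i₀} => ν)).prod
    (MeasurePreserving.id _)).comp (measurePreserving_piEquivPiSubtypeProd (fun _ => ν) (· = i₀))

theorem pi_setOf_forall_ne_mem (ν : Measure α) [SigmaFinite ν] (i₀ : ι) {T : Set (α × α)}
    (hT : MeasurableSet T) :
    Measure.pi (fun _ : ι => ν) {y | ∀ j, j ≠ i₀ → (y i₀, y j) ∈ T} =
      ∫⁻ x, ν (Prod.mk x ⁻¹' T) ^ (Fintype.card ι - 1) ∂ν := by
  set A : Set (α × ({j // ¬ j = i₀} → α)) := {p | ∀ j, (p.1, p.2 j) ∈ T}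
  have hA : MeasurableSet A := by
    simp only [A, ofPred_forall]
    exact MeasurableSet.iInter fun j =>
      (measurable_fst.prodMk ((measurable_pi_apply j).comp measurable_snd)) hT
  have hsec : ∀ x, Prod.mk x ⁻¹' A = Set.pi univ fun _ => Prod.mk x ⁻¹' T := by
    intro x; ext; simp [A]
  have hpre : {y : ι → α | ∀ j, j ≠ i₀ → (y i₀, y j) ∈ T} =
      (fun y : ι → α => (y i₀, fun j : {j // ¬ j = i₀} => y j)) ⁻¹' A := by
    ext y; simp [A]
  rw [hpre, (measurePreserving_eval_prod_restrict_ne ν i₀).measure_preimage hA.nullMeasurableSet,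
    Measure.prod_apply hA]
  simp_rw [hsec, Measure.pi_pi, Finset.prod_const, Finset.card_univ, Fintype.card_subtype_compl,
    Fintype.card_subtype_eq]

end Pi

instance : IsProbabilityMeasure unifUnit :=
  ⟨by simp [unifUnit]⟩

lemma unifUnit_Iic {t : ℝ} (ht : t ∈ Icc (0:ℝ) 1) : unifUnit (Iic t) = ENNReal.ofReal t := by
  rw [unifUnit, Measure.restrict_apply measurableSet_Iic, inter_comm, ← Ici_inter_Iic,
    inter_assoc, Iic_inter_Iic, min_eq_right ht.2, Ici_inter_Iic, Real.volume_Icc, sub_zero]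

lemma monotone_unifUnit_Iic : Monotone fun t => unifUnit (Iic t) :=
  fun _ _ h => measure_mono (Iic_subset_Iic.2 h)

section Marks
variable {E : Type*} [MeasurableSpace E] (μ : Measure E) [IsProbabilityMeasure μ]
  {S : Set E} (hS : MeasurableSet S)
include hS

lemma prod_unifUnit_setOf_mem_imp_lt (t : ℝ) :
    μ.prod unifUnit {w | w.1 ∈ S → t < w.2} = 1 - μ S * unifUnit (Iic t) := by
  have hc : {w : E × ℝ | w.1 ∈ S → t < w.2} = (S ×ˢ Iic t)ᶜ := by
    ext w; simp [imp_iff_not_or, not_le]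
  rw [hc, prob_compl_eq_one_sub (hS.prod measurableSet_Iic), Measure.prod_prod]

lemma lintegral_prod_unifUnit_pow (k : ℕ) :
    ∫⁻ u, (μ.prod unifUnit {w | w.1 ∈ S → u.2 < w.2}) ^ k ∂(μ.prod unifUnit) =
      ∫⁻ t in Icc (0:ℝ) 1, (1 - μ S * ENNReal.ofReal t) ^ k := by
  simp_rw [prod_unifUnit_setOf_mem_imp_lt μ hS]
  have hmeas : Measurable fun t => (1 - μ S * unifUnit (Iic t)) ^ k :=
    (measurable_const.sub (measurable_const.mul monotone_unifUnit_Iic.measurable)).pow_const k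
  rw [measurePreserving_snd.lintegral_comp hmeas]
  exact setLIntegral_congr_fun measurableSet_Icc fun t ht => by rw [unifUnit_Iic ht]

variable {ι Ω : Type*} [Fintype ι] [DecidableEq ι] [MeasurableSpace Ω] {P : Measure Ω} (i₀ : ι)
  {X : ι → Ω → E} {M : ι → Ω → ℝ}

theorem measure_forall_ne_mem_imp_lt
    (hind : iIndepFun (fun i ω => (X i ω, M i ω)) P)
    (hlaw : ∀ i, P.map (fun ω => (X i ω, M i ω)) = μ.prod unifUnit) :
    P {ω | ∀ j, j ≠ i₀ → X j ω ∈ S → M i₀ ω < M j ω} =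
      ∫⁻ t in Icc (0:ℝ) 1, (1 - μ S * ENNReal.ofReal t) ^ (Fintype.card ι - 1) := by
  have hP : IsProbabilityMeasure P := hind.isProbabilityMeasure
  have hY : ∀ i, AEMeasurable (fun ω => (X i ω, M i ω)) P := fun i =>
    .of_map_ne_zero (by rw [hlaw i]; exact IsProbabilityMeasure.ne_zero _)
  set T : Set ((E × ℝ) × (E × ℝ)) := {p | p.2.1 ∈ S → p.1.2 < p.2.2}
  have hT : MeasurableSet T :=
    (measurable_snd.fst hS).imp (measurableSet_lt measurable_fst.snd measurable_snd.snd)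
  have hE : MeasurableSet {y : ι → E × ℝ | ∀ j, j ≠ i₀ → (y i₀, y j) ∈ T} := by
    simp only [ofPred_forall]
    exact .iInter fun j => .iInter fun _ =>
      ((measurable_pi_apply i₀).prodMk (measurable_pi_apply j)) hT
  calc P {ω | ∀ j, j ≠ i₀ → X j ω ∈ S → M i₀ ω < M j ω}
      = P.map (fun ω i => (X i ω, M i ω)) {y | ∀ j, j ≠ i₀ → (y i₀, y j) ∈ T} := by
        rw [Measure.map_apply_of_aemeasurable (aemeasurable_pi_lambda _ hY) hE]; rfl
    _ = Measure.pi (fun _ : ι => μ.prod unifUnit) {y | ∀ j, j ≠ i₀ → (y i₀, y j) ∈ T} := by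
        rw [hind.map_fun_eq_pi_map hY, funext hlaw]
    _ = _ := pi_setOf_forall_ne_mem _ i₀ hT
    _ = _ := lintegral_prod_unifUnit_pow μ hS _

theorem measure_forall_ne_mem_imp_lt_toReal (hp : 0 < (μ S).toReal)
    (hind : iIndepFun (fun i ω => (X i ω, M i ω)) P)
    (hlaw : ∀ i, P.map (fun ω => (X i ω, M i ω)) = μ.prod unifUnit) :
    (P {ω | ∀ j, j ≠ i₀ → X j ω ∈ S → M i₀ ω < M j ω}).toReal =
      (1 - (1 - (μ S).toReal) ^ Fintype.card ι) / ((μ S).toReal * Fintype.card ι) := by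
  set p := (μ S).toReal
  have hp₁ : p ≤ 1 := measureReal_le_one
  have hμS : μ S = ENNReal.ofReal p := (ENNReal.ofReal_toReal (measure_ne_top μ S)).symm
  obtain ⟨k, hk⟩ := Nat.exists_eq_add_one_of_ne_zero (Fintype.card_pos_iff.2 ⟨i₀⟩).ne'
  rw [measure_forall_ne_mem_imp_lt μ hS i₀ hind hlaw, hμS,
    lintegral_Icc_one_sub_mul_pow hp hp₁, hk, Nat.add_sub_cancel, ENNReal.toReal_ofReal]
  · push_cast
    rfl
  · have : (1 - p) ^ (k + 1) ≤ 1 := pow_le_one₀ (by linarith) (by linarith)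
    exact div_nonneg (by linarith) (by positivity)

end Marks

lemma isProbabilityMeasure_unifDisk {R : ℝ} (hR : 0 < R) : IsProbabilityMeasure (unifDisk R) :=
  ⟨by rw [unifDisk, Measure.smul_apply, Measure.restrict_apply_univ, smul_eq_mul,
    ENNReal.inv_mul_cancel (Metric.measure_closedBall_pos _ _ hR).ne' measure_closedBall_lt_top.ne]⟩

lemma unifDisk_apply_of_subset {R : ℝ} {S : Set (EuclideanSpace ℝ (Fin 2))}
    (hS : S ⊆ Metric.closedBall 0 R) :
    unifDisk R S = volume S / volume (Metric.closedBall (0 : EuclideanSpace ℝ (Fin 2)) R) := by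
  rw [unifDisk, Measure.smul_apply,
    Measure.restrict_apply' Metric.isClosed_closedBall.measurableSet, inter_eq_left.2 hS,
    smul_eq_mul, ENNReal.div_eq_inv_mul]

lemma unifDisk_apply_toReal {R : ℝ} (hR : 0 < R) {S : Set (EuclideanSpace ℝ (Fin 2))}
    (hS : S ⊆ Metric.closedBall 0 R) :
    (unifDisk R S).toReal = (volume S).toReal / (π * R ^ 2) := by
  rw [unifDisk_apply_of_subset hS, ENNReal.toReal_div, EuclideanSpace.volume_closedBall_fin_two,
    ENNReal.toReal_mul, ENNReal.toReal_pow, ENNReal.toReal_ofReal hR.le,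
    ENNReal.toReal_ofReal pi_pos.le, mul_comm]

theorem stmt16_general (ρp a : ℝ) (hρp : 0 < ρp) (ha : 0 < a)
    (nR : ℝ → ℕ) (hnR : ∀ R : ℝ, nR R = ⌈π * ρp * R ^ 2⌉₊)
    (S : ℝ → Set (EuclideanSpace ℝ (Fin 2)))
    (hSmeas : ∀ R : ℝ, 0 < R → a ≤ π * R ^ 2 → MeasurableSet (S R))
    (hSsub : ∀ R : ℝ, 0 < R → a ≤ π * R ^ 2 → S R ⊆ Metric.closedBall 0 R)
    (hSvol : ∀ R : ℝ, 0 < R → a ≤ π * R ^ 2 → (volume (S R)).toReal = a)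
    (Ω : ℝ → Type) [∀ R, MeasurableSpace (Ω R)]
    (P : (R : ℝ) → Measure (Ω R))
    (X : (R : ℝ) → Fin (nR R) → Ω R → EuclideanSpace ℝ (Fin 2))
    (M : (R : ℝ) → Fin (nR R) → Ω R → ℝ)
    (hindep : ∀ R : ℝ, 0 < R → a ≤ π * R ^ 2 →
      iIndepFun
        (fun i : Fin (nR R) => fun ω => (X R i ω, M R i ω)) (P R))
    (hlaw : ∀ (R : ℝ), 0 < R → a ≤ π * R ^ 2 → ∀ i : Fin (nR R),
      (P R).map (fun ω => (X R i ω, M R i ω)) = (unifDisk R).prod unifUnit) :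
    Tendsto
      (fun R : ℝ =>
        if h0 : 0 < nR R then
          ((P R) {ω | ∀ j : Fin (nR R), j ≠ ⟨0, h0⟩ → X R j ω ∈ S R →
            M R ⟨0, h0⟩ ω < M R j ω}).toReal
        else 0)
      atTop (nhds ((1 - Real.exp (-(ρp * a))) / (ρp * a))) := by
  have hdisk : Tendsto (fun R : ℝ => π * R ^ 2) atTop atTop :=
    (tendsto_pow_atTop two_ne_zero).const_mul_atTop pi_pos
  have hq : Tendsto (fun R : ℝ => a / (π * R ^ 2)) atTop (𝓝[≠] 0) := by
    refine tendsto_nhdsWithin_iff.2 ⟨tendsto_const_nhds.div_atTop hdisk, ?_⟩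
    filter_upwards [eventually_gt_atTop 0] with R hR
    exact (by positivity : a / (π * R ^ 2) ≠ 0)
  have hqn : Tendsto (fun R : ℝ => a / (π * R ^ 2) * nR R) atTop (𝓝 (ρp * a)) := by
    simpa only [hnR] using tendsto_natCeil_mul_div_sq hρp a
  refine (tendsto_one_sub_one_sub_pow_div (by positivity) hq hqn).congr' ?_
  filter_upwards [eventually_gt_atTop 0, hdisk.eventually_ge_atTop a] with R hR hRa
  have h0 : 0 < nR R := hnR R ▸ Nat.ceil_pos.2 (by positivity)
  have := isProbabilityMeasure_unifDisk hR
  have hp : (unifDisk R (S R)).toReal = a / (π * R ^ 2) := by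
    rw [unifDisk_apply_toReal hR (hSsub R hR hRa), hSvol R hR hRa]
  rw [dif_pos h0, measure_forall_ne_mem_imp_lt_toReal _ (hSmeas R hR hRa) _ (hp ▸ by positivity)
    (hindep R hR hRa) (hlaw R hR hRa), hp, Fintype.card_fin]

/-- Fix `ρ_p > 0` and `a > 0`.  For each `R > 0` with `πR² ≥ a` let
`n_R = ⌈π ρ_p R²⌉`, `S_R` a Borel subset of the closed disk `B(0,R)` of measure `a`,
`X_2, …, X_{n_R}` i.i.d. uniform on `B(0,R)` and `M_1, …, M_{n_R}` i.i.d. uniform on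
`[0,1]` independent of the positions (pairs `(X_i, M_i)` i.i.d. with product law).  Then
`Pr(M_1 < M_j for every j ∈ {2,…,n_R} with X_j ∈ S_R) → (1 − e^{−ρ_p a})/(ρ_p a)` as
`R → ∞`.  (Index `0` plays the role of index `1` in the informal statement.) -/
theorem stmt16 (ρp a : ℝ) (hρp : 0 < ρp) (ha : 0 < a)
    (nR : ℝ → ℕ) (hnR : ∀ R : ℝ, nR R = ⌈π * ρp * R ^ 2⌉₊)
    (S : ℝ → Set (EuclideanSpace ℝ (Fin 2)))
    (hSmeas : ∀ R : ℝ, 0 < R → a ≤ π * R ^ 2 → MeasurableSet (S R))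
    (hSsub : ∀ R : ℝ, 0 < R → a ≤ π * R ^ 2 → S R ⊆ Metric.closedBall 0 R)
    (hSvol : ∀ R : ℝ, 0 < R → a ≤ π * R ^ 2 → (volume (S R)).toReal = a)
    (Ω : ℝ → Type) [∀ R, MeasurableSpace (Ω R)]
    (P : (R : ℝ) → Measure (Ω R)) (hprob : ∀ R, IsProbabilityMeasure (P R))
    (X : (R : ℝ) → Fin (nR R) → Ω R → EuclideanSpace ℝ (Fin 2))
    (M : (R : ℝ) → Fin (nR R) → Ω R → ℝ)
    (hmeasX : ∀ R i, Measurable (X R i)) (hmeasM : ∀ R i, Measurable (M R i))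
    (hindep : ∀ R : ℝ, 0 < R → a ≤ π * R ^ 2 →
      iIndepFun
        (fun i : Fin (nR R) => fun ω => (X R i ω, M R i ω)) (P R))
    (hlaw : ∀ (R : ℝ), 0 < R → a ≤ π * R ^ 2 → ∀ i : Fin (nR R),
      (P R).map (fun ω => (X R i ω, M R i ω)) = (unifDisk R).prod unifUnit) :
    Tendsto
      (fun R : ℝ =>
        if h0 : 0 < nR R then
          ((P R) {ω | ∀ j : Fin (nR R), j ≠ ⟨0, h0⟩ → X R j ω ∈ S R →
            M R ⟨0, h0⟩ ω < M R j ω}).toReal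
        else 0)
      atTop (nhds ((1 - Real.exp (-(ρp * a))) / (ρp * a))) :=
  stmt16_general ρp a hρp ha nR hnR S hSmeas hSsub hSvol Ω P X M hindep hlaw
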